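/- arXiv:2105.04849 — 5 statements merged into one kernel-verified Lean document; each statement's English description precedes it below -/
import Mathlib

section
/- Let i : ℓ¹(ℕ) → (ℓ¹(ℕ), ‖·‖_∞) be the identity map, viewed as a bounded linear operator from (ℓ¹, ‖·‖_1) to the space ℓ¹ equipped with the sup norm. Then the image of the adjoint i* is contained in a σ-porous subset of (ℓ^∞(ℕ), ‖·‖_∞); in particular it is a σ-porous subset of ℓ^∞(ℕ). -/
open Filter

/-- `A` is a porous subset of the metric space `α` with porosity constant `c`. -/
def Porous {α : Type*} [PseudoMetricSpace α] (A : Set α) (c : ℝ) : Prop :=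
  ∀ a ∈ A, ∃ y : ℕ → α, Tendsto y atTop (nhds a) ∧
    ∀ n, Metric.closedBall (y n) (c * dist (y n) a) ∩ A = ∅

/-- `A` is σ-porous: a countable union of porous sets. -/
def SigmaPorous {α : Type*} [PseudoMetricSpace α] (A : Set α) : Prop :=
  ∃ P : ℕ → Set α, (∀ n, ∃ c : ℝ, 0 < c ∧ c < 1 ∧ Porous (P n) c) ∧ A = ⋃ n, P n

/-- The image of the adjoint `i*` of the identity `i : (ℓ¹, ‖·‖₁) → (ℓ¹, ‖·‖_∞)`,
viewed inside `ℓ^∞ = ((ℓ¹, ‖·‖₁))^*`: those `g ∈ ℓ^∞` inducing a functional on `ℓ¹`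
that is bounded with respect to the sup norm. -/
noncomputable def adjointImage : Set (lp (fun _ : ℕ => ℝ) ⊤) :=
  {g | ∃ C : ℝ, ∀ f : lp (fun _ : ℕ => ℝ) 1, |∑' n, g n * f n| ≤ C * ⨆ n, |f n|}

/-- A "bump": the element of `ℓ^∞` equal to `r` on `[M, M+N)` and `0` elsewhere. -/
noncomputable def bump (M N : ℕ) (r : ℝ) : lp (fun _ : ℕ => ℝ) ⊤ :=
  ⟨fun n => if n ∈ Finset.Ico M (M + N) then r else 0, by
    apply memℓp_infty
    refine ⟨|r|, ?_⟩
    rintro x ⟨n, rfl⟩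
    dsimp only
    split <;> simp [Real.norm_eq_abs, abs_nonneg]⟩

lemma bump_apply (M N : ℕ) (r : ℝ) (n : ℕ) :
    (bump M N r : ℕ → ℝ) n = if n ∈ Finset.Ico M (M + N) then r else 0 := rfl

lemma bump_norm (M N : ℕ) (r : ℝ) (hN : 0 < N) (hr : 0 < r) : ‖bump M N r‖ = r := by
  rw [lp.norm_eq_ciSup]
  have hb : ∀ n : ℕ, ‖(bump M N r : ℕ → ℝ) n‖ ≤ r := by
    intro n
    rw [bump_apply, Real.norm_eq_abs]
    split
    · simp [abs_of_pos hr]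
    · simp [hr.le]
  refine le_antisymm (ciSup_le hb) ?_
  have hM : (bump M N r : ℕ → ℝ) M = r := by
    rw [bump_apply, if_pos]
    exact Finset.mem_Ico.2 ⟨le_rfl, by omega⟩
  calc r = ‖(bump M N r : ℕ → ℝ) M‖ := by rw [hM, Real.norm_eq_abs, abs_of_pos hr]
    _ ≤ ⨆ n, ‖(bump M N r : ℕ → ℝ) n‖ := le_ciSup ⟨r, by rintro x ⟨n, rfl⟩; exact hb n⟩ M

theorem stmt4 : SigmaPorous adjointImage := by
  classical
  refine ⟨fun m => adjointImage ∩ {g | ∀ F : Finset ℕ, ∑ n ∈ F, |g n| ≤ (m : ℝ)}, ?_, ?_⟩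
  · intro m
    refine ⟨1/2, by norm_num, by norm_num, ?_⟩
    rintro a ⟨-, ha⟩
    -- `|a ·|` is summable since all partial sums are bounded by `m`
    have hsum : Summable fun n => |(a : ℕ → ℝ) n| :=
      summable_of_sum_range_le (fun n => abs_nonneg _) fun n => ha (Finset.range n)
    obtain ⟨s, hs⟩ := summable_iff_vanishing_norm.1 hsum 1 one_pos
    set M : ℕ := s.sup id + 1 with hM
    set r : ℕ → ℝ := fun k => 1 / (k + 1) with hr
    have hrpos : ∀ k, 0 < r k := fun k => by positivity
    set N : ℕ → ℕ := fun k => 2 * (m + 2) * (k + 1) with hN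
    have hNpos : ∀ k, 0 < N k := fun k => by positivity
    set y : ℕ → lp (fun _ : ℕ => ℝ) ⊤ := fun k => a + bump M (N k) (r k) with hy
    have hdist : ∀ k, dist (y k) a = r k := by
      intro k
      rw [dist_eq_norm, hy]
      simp only [add_sub_cancel_left]
      exact bump_norm M (N k) (r k) (hNpos k) (hrpos k)
    refine ⟨y, ?_, ?_⟩
    · rw [tendsto_iff_dist_tendsto_zero]
      simp only [hdist]
      exact tendsto_one_div_add_atTop_nhds_zero_nat
    · intro k
      rw [Set.eq_empty_iff_forall_notMem]
      rintro g ⟨hg1, -, hg2⟩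
      rw [Metric.mem_closedBall, hdist] at hg1
      -- pointwise bound `|g n - y k n| ≤ r k / 2`
      have hpt : ∀ n, |(g : ℕ → ℝ) n - (y k : ℕ → ℝ) n| ≤ r k / 2 := by
        intro n
        have h1 : ‖(g - y k : lp (fun _ : ℕ => ℝ) ⊤) n‖ ≤ ‖g - y k‖ :=
          lp.norm_apply_le_norm ENNReal.top_ne_zero _ n
        rw [lp.coeFn_sub, Pi.sub_apply, Real.norm_eq_abs] at h1
        calc |(g : ℕ → ℝ) n - (y k : ℕ → ℝ) n| ≤ ‖g - y k‖ := h1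
          _ = dist g (y k) := (dist_eq_norm _ _).symm
          _ ≤ 1/2 * r k := hg1
          _ = r k / 2 := by ring
      -- on the block, `|g n| ≥ r k / 2 - |a n|`
      have hblock : ∀ n ∈ Finset.Ico M (M + N k),
          r k / 2 - |(a : ℕ → ℝ) n| ≤ |(g : ℕ → ℝ) n| := by
        intro n hn
        have hyval : (y k : ℕ → ℝ) n = (a : ℕ → ℝ) n + r k := by
          rw [hy, lp.coeFn_add, Pi.add_apply, bump_apply, if_pos hn]
        have h2 := hpt n
        rw [hyval] at h2
        have h3 : (a : ℕ → ℝ) n + r k / 2 ≤ (g : ℕ → ℝ) n := by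
          have := abs_le.1 h2
          linarith [this.1]
        calc r k / 2 - |(a : ℕ → ℝ) n| ≤ (a : ℕ → ℝ) n + r k / 2 := by
              have := neg_abs_le ((a : ℕ → ℝ) n); linarith
          _ ≤ (g : ℕ → ℝ) n := h3
          _ ≤ |(g : ℕ → ℝ) n| := le_abs_self _
      -- the block is disjoint from `s`, so the `a`-sum over it is `< 1`
      have hdisj : Disjoint (Finset.Ico M (M + N k)) s := by
        rw [Finset.disjoint_left]
        intro n hn hns
        have h4 : n ≤ s.sup id := Finset.le_sup (f := id) hns
        have h5 : M ≤ n := (Finset.mem_Ico.1 hn).1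
        omega
      have hasum : ∑ n ∈ Finset.Ico M (M + N k), |(a : ℕ → ℝ) n| < 1 := by
        have := hs _ hdisj
        rw [Real.norm_eq_abs] at this
        calc ∑ n ∈ Finset.Ico M (M + N k), |(a : ℕ → ℝ) n|
            ≤ abs (∑ n ∈ Finset.Ico M (M + N k), |(a : ℕ → ℝ) n|) := le_abs_self _
          _ < 1 := this
      -- sum the lower bounds over the block
      have hsumg : (N k : ℝ) * (r k / 2) - (∑ n ∈ Finset.Ico M (M + N k), |(a : ℕ → ℝ) n|)
          ≤ (∑ n ∈ Finset.Ico M (M + N k), |(g : ℕ → ℝ) n|) := by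
        have := Finset.sum_le_sum hblock
        rwa [Finset.sum_sub_distrib, Finset.sum_const, Nat.card_Ico,
          Nat.add_sub_cancel_left, nsmul_eq_mul] at this
      have hNr : (N k : ℝ) * (r k / 2) = (m : ℝ) + 2 := by
        have hk : ((k : ℝ) + 1) ≠ 0 := by positivity
        rw [hN, hr]
        push_cast
        field_simp
      have hgm := hg2 (Finset.Ico M (M + N k))
      rw [hNr] at hsumg
      linarith
  · ext g
    simp only [Set.mem_iUnion]
    constructor
    · rintro ⟨C, hC⟩
      obtain ⟨m, hm⟩ := exists_nat_ge (max C 0)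
      refine ⟨m, ⟨C, hC⟩, ?_⟩
      intro F
      -- the finitely supported sign vector
      set f0 : ℕ → ℝ := fun n => if n ∈ F then Real.sign ((g : ℕ → ℝ) n) else 0 with hf0
      have hf0mem : Memℓp f0 1 := by
        apply memℓp_gen
        apply summable_of_ne_finset_zero (s := F)
        intro n hn
        simp [hf0, hn]
      set f : lp (fun _ : ℕ => ℝ) 1 := ⟨f0, hf0mem⟩ with hf
      have hfapp : ∀ n, (f : ℕ → ℝ) n = f0 n := fun n => rfl
      have htsum : ∑' n, (g : ℕ → ℝ) n * (f : ℕ → ℝ) n = ∑ n ∈ F, |(g : ℕ → ℝ) n| := by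
        rw [tsum_eq_sum (s := F) (by intro n hn; rw [hfapp]; simp [hf0, hn])]
        apply Finset.sum_congr rfl
        intro n hn
        rw [hfapp, hf0]
        simp only [if_pos hn]
        rcases lt_trichotomy ((g : ℕ → ℝ) n) 0 with h | h | h
        · rw [Real.sign_of_neg h, abs_of_neg h]; ring
        · simp [h]
        · rw [Real.sign_of_pos h, abs_of_pos h]; ring
      have hbd := hC f
      rw [htsum] at hbd
      have hsup1 : (⨆ n, |(f : ℕ → ℝ) n|) ≤ 1 := by
        apply ciSup_le
        intro n
        rw [hfapp]
        simp only [hf0]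
        split_ifs
        · rcases lt_trichotomy ((g : ℕ → ℝ) n) 0 with h | h | h
          · rw [Real.sign_of_neg h]; norm_num
          · simp [h]
          · rw [Real.sign_of_pos h]; norm_num
        · simp
      have hsup0 : 0 ≤ ⨆ n, |(f : ℕ → ℝ) n| := Real.iSup_nonneg fun n => abs_nonneg _
      have h6 : C * (⨆ n, |(f : ℕ → ℝ) n|) ≤ max C 0 := by
        rcases le_or_gt 0 C with hC0 | hC0
        · have h7 : C * (⨆ n, |(f : ℕ → ℝ) n|) ≤ C := by nlinarith
          exact h7.trans (le_max_left _ _)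
        · have h7 : C * (⨆ n, |(f : ℕ → ℝ) n|) ≤ 0 :=
            mul_nonpos_of_nonpos_of_nonneg hC0.le hsup0
          exact h7.trans (le_max_right _ _)
      calc ∑ n ∈ F, |(g : ℕ → ℝ) n| ≤ abs (∑ n ∈ F, |(g : ℕ → ℝ) n|) := le_abs_self _
        _ ≤ C * ⨆ n, |(f : ℕ → ℝ) n| := hbd
        _ ≤ max C 0 := h6
        _ ≤ m := hm
    · rintro ⟨m, hg, -⟩
      exact hg
end

section
/- Let X and Z be Banach spaces and T : X → Z a one-to-one bounded linear operator with adjoint T* : Z* → X*. The following are equivalent: (i) T*(Z*) is not a σ-porous subset of X*; (ii) there exists α > 0 such that α‖x‖_X ≤ ‖T(x)‖_Z for all x ∈ X; (iii) T* is surjective. -/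
open Filter

/-!
If `T` is bounded below, `φ ∘ T⁻¹` is a bounded functional on the subspace `T(X)`, and a
Hahn–Banach extension of it is a preimage of `φ` under `T*`. If `T*` is onto, its range is the
whole of `X*`, which is complete, and porous sets are nowhere dense, so Baire's theorem rules out
σ-porosity. If `T` is not bounded below, take unit vectors `x` with `‖T x‖` arbitrarily small and
functionals `u` with `u x = 1`: every functional in `T*(r B_{Z*})` nearly vanishes at `x`, while
`z* ∘ T + δ u` differs from `z* ∘ T` at `x` by `δ`, so `T*(r B_{Z*})` is porous with constant `1/2`.
-/

open Metric Set

section Porosity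

variable {α : Type*} [PseudoMetricSpace α] {A : Set α} {c : ℝ}

theorem Porous.isNowhereDense (hc : 0 < c) (hA : Porous A c) : IsNowhereDense A := by
  refine eq_empty_iff_forall_notMem.2 fun x hx => ?_
  obtain ⟨a, ha, haA⟩ := mem_closure_iff.1 (interior_subset hx) _ isOpen_interior hx
  obtain ⟨y, hy, hdisj⟩ := hA a haA
  obtain ⟨n, hn⟩ := (hy.eventually (isOpen_interior.mem_nhds ha)).exists
  -- `y n ∈ closure A`, so a ball around it missing `A` must be degenerate, i.e. `y n = a ∈ A`
  have hpos : 0 < dist (y n) a := by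
    refine dist_nonneg.lt_of_ne fun h => (hdisj n).subset ⟨?_, haA⟩
    simp [mem_closedBall, dist_comm a, ← h]
  obtain ⟨b, hbA, hb⟩ := Metric.mem_closure_iff.1 (interior_subset hn) _ (mul_pos hc hpos)
  exact (hdisj n).subset ⟨mem_closedBall.2 (dist_comm b (y n) ▸ hb.le), hbA⟩

theorem SigmaPorous.isMeagre (hA : SigmaPorous A) : IsMeagre A := by
  obtain ⟨P, hP, rfl⟩ := hA
  exact isMeagre_iUnion fun n =>
    let ⟨_, hc, _, hPn⟩ := hP n
    (hPn.isNowhereDense hc).isMeagre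

theorem not_sigmaPorous_univ [BaireSpace α] [Nonempty α] : ¬ SigmaPorous (univ : Set α) :=
  fun h => not_isMeagre_of_isOpen isOpen_univ univ_nonempty h.isMeagre

theorem porous_of_forall_exists_dist_lt
    (h : ∀ a ∈ A, ∀ ε > 0, ∃ y, dist y a < ε ∧ closedBall y (c * dist y a) ∩ A = ∅) :
    Porous A c := by
  intro a ha
  choose y hya hyA using fun n : ℕ => h a ha (1 / (n + 1)) Nat.one_div_pos_of_nat
  refine ⟨y, tendsto_iff_dist_tendsto_zero.2 ?_, hyA⟩
  exact squeeze_zero (fun _ => dist_nonneg) (fun n => (hya n).le)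
    tendsto_one_div_add_atTop_nhds_zero_nat

end Porosity

section Adjoint

variable {X Z : Type*} [NormedAddCommGroup X] [NormedSpace ℝ X]
  [NormedAddCommGroup Z] [NormedSpace ℝ Z] (T : X →L[ℝ] Z)

theorem exists_norm_eq_one_norm_apply_lt (hT : ¬ ∃ α : ℝ, 0 < α ∧ ∀ x, α * ‖x‖ ≤ ‖T x‖)
    {ε : ℝ} (hε : 0 < ε) : ∃ x : X, ‖x‖ = 1 ∧ ‖T x‖ < ε := by
  push Not at hT
  obtain ⟨x, hx⟩ := hT ε hε
  have hx₀ : 0 < ‖x‖ := norm_pos_iff.2 fun h => by simp [h] at hx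
  refine ⟨‖x‖⁻¹ • x, by simp [norm_smul, hx₀.ne'], ?_⟩
  rw [map_smul, norm_smul, norm_inv, norm_norm, inv_mul_lt_iff₀ hx₀]
  linarith

theorem sub_le_dist_comp_comp_add_smul {z' v' : StrongDual ℝ Z} {u : StrongDual ℝ X} {x : X}
    (hx : ‖x‖ ≤ 1) (hux : u x = 1) (δ : ℝ) :
    δ - (‖z'‖ + ‖v'‖) * ‖T x‖ ≤ dist (v'.comp T) (z'.comp T + δ • u) := by
  set f := z'.comp T + δ • u - v'.comp T
  have hfx : f x = z' (T x) - v' (T x) + δ := by simp [f, hux]; ring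
  calc δ - (‖z'‖ + ‖v'‖) * ‖T x‖ ≤ f x := by
        have hz := z'.le_opNorm (T x)
        have hv := v'.le_opNorm (T x)
        rw [Real.norm_eq_abs] at hz hv
        linarith [neg_abs_le (z' (T x)), le_abs_self (v' (T x))]
    _ ≤ ‖f‖ := (le_abs_self _).trans (f.unit_le_opNorm x hx)
    _ = dist (v'.comp T) (z'.comp T + δ • u) := by rw [dist_comm, dist_eq_norm]

theorem porous_image_comp_closedBall (hT : ∀ ε > 0, ∃ x : X, ‖x‖ = 1 ∧ ‖T x‖ < ε) (r : ℝ) :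
    Porous ((fun z' : StrongDual ℝ Z => z'.comp T) '' closedBall 0 r) (1 / 2) := by
  refine porous_of_forall_exists_dist_lt ?_
  rintro _ ⟨z', hz', rfl⟩ ε hε
  rw [mem_closedBall_zero_iff] at hz'
  have hr : 0 ≤ r := (norm_nonneg z').trans hz'
  -- perturb `z' ∘ T` by `δ u`, where `u` norms a unit vector `x` that `T` almost kills
  set δ := ε / 2
  obtain ⟨x, hx, hTx⟩ := hT (δ / (4 * (r + 1))) (by positivity)
  obtain ⟨u, hu, hux⟩ := exists_dual_vector'' ℝ x
  rw [hx, RCLike.ofReal_one] at hux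
  have hdist : dist (z'.comp T + δ • u) (z'.comp T) ≤ δ := by
    rw [dist_eq_norm, add_sub_cancel_left, norm_smul, Real.norm_of_nonneg (by positivity)]
    exact mul_le_of_le_one_right (by positivity) hu
  refine ⟨z'.comp T + δ • u, hdist.trans_lt (half_lt_self hε), eq_empty_iff_forall_notMem.2 ?_⟩
  rintro _ ⟨hw, v', hv', rfl⟩
  rw [mem_closedBall_zero_iff] at hv'
  have hlow := sub_le_dist_comp_comp_add_smul T hx.le hux δ (z' := z') (v' := v')
  have hsmall : (‖z'‖ + ‖v'‖) * ‖T x‖ < δ / 2 := by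
    rw [lt_div_iff₀ (by positivity)] at hTx
    nlinarith [norm_nonneg (T x)]
  linarith [mem_closedBall.1 hw]

theorem sigmaPorous_range_comp_of_not_bounded_below
    (hT : ¬ ∃ α : ℝ, 0 < α ∧ ∀ x, α * ‖x‖ ≤ ‖T x‖) :
    SigmaPorous (range fun z' : StrongDual ℝ Z => z'.comp T) := by
  refine ⟨fun n => (fun z' : StrongDual ℝ Z => z'.comp T) '' closedBall 0 n,
    fun n => ⟨1 / 2, by norm_num, by norm_num, ?_⟩, ?_⟩
  · exact porous_image_comp_closedBall T (fun _ => exists_norm_eq_one_norm_apply_lt T hT) n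
  · rw [← image_univ, ← iUnion_closedBall_nat 0, image_iUnion]

theorem surjective_comp_of_bounded_below {α : ℝ} (hα : 0 < α) (hT : ∀ x, α * ‖x‖ ≤ ‖T x‖) :
    Function.Surjective fun z' : StrongDual ℝ Z => z'.comp T := by
  intro φ
  have hinj : Function.Injective T := (injective_iff_map_eq_zero T).2 fun x hx =>
    norm_le_zero_iff.1 <| nonpos_of_mul_nonpos_right (by simpa [hx] using hT x) hα
  let e := LinearEquiv.ofInjective T.toLinearMap hinj
  have he : ∀ y, ‖e.symm y‖ ≤ α⁻¹ * ‖y‖ := fun y => by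
    rw [le_inv_mul_iff₀ hα]
    have hTe : T (e.symm y) = y := congrArg Subtype.val (e.apply_symm_apply y)
    exact (hT _).trans_eq (congrArg norm hTe)
  let ψ : StrongDual ℝ (LinearMap.range T.toLinearMap) :=
    (φ.toLinearMap ∘ₗ e.symm.toLinearMap).mkContinuous (‖φ‖ * α⁻¹) fun y =>
      (φ.le_opNorm _).trans <| by
        rw [mul_assoc]; exact mul_le_mul_of_nonneg_left (he y) (norm_nonneg φ)
  obtain ⟨g, hg, -⟩ := exists_extension_norm_eq _ ψ
  exact ⟨g, ContinuousLinearMap.ext fun x => (hg (e x)).trans (by simp [ψ])⟩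

end Adjoint

open NormedSpace in
theorem stmt5_general {X Z : Type*} [NormedAddCommGroup X] [NormedSpace ℝ X]
    [NormedAddCommGroup Z] [NormedSpace ℝ Z]
    (T : X →L[ℝ] Z) :
    (¬ SigmaPorous (Set.range fun z' : StrongDual ℝ Z => z'.comp T) ↔
        ∃ α : ℝ, 0 < α ∧ ∀ x, α * ‖x‖ ≤ ‖T x‖) ∧
    (¬ SigmaPorous (Set.range fun z' : StrongDual ℝ Z => z'.comp T) ↔
        Function.Surjective fun z' : StrongDual ℝ Z => z'.comp T) := by
  have bounded_of_not : ¬ SigmaPorous (range fun z' : StrongDual ℝ Z => z'.comp T) →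
      ∃ α : ℝ, 0 < α ∧ ∀ x, α * ‖x‖ ≤ ‖T x‖ :=
    not_imp_comm.1 (sigmaPorous_range_comp_of_not_bounded_below T)
  have surjective_of_bounded : (∃ α : ℝ, 0 < α ∧ ∀ x, α * ‖x‖ ≤ ‖T x‖) →
      Function.Surjective fun z' : StrongDual ℝ Z => z'.comp T :=
    fun ⟨_, hα, hT⟩ => surjective_comp_of_bounded_below T hα hT
  have not_of_surjective : (Function.Surjective fun z' : StrongDual ℝ Z => z'.comp T) →
      ¬ SigmaPorous (range fun z' : StrongDual ℝ Z => z'.comp T) := fun hs => by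
    rw [hs.range_eq]
    exact not_sigmaPorous_univ
  exact ⟨⟨bounded_of_not, not_of_surjective ∘ surjective_of_bounded⟩,
    ⟨surjective_of_bounded ∘ bounded_of_not, not_of_surjective⟩⟩

open NormedSpace in
theorem stmt5 {X Z : Type*} [NormedAddCommGroup X] [NormedSpace ℝ X] [CompleteSpace X]
    [NormedAddCommGroup Z] [NormedSpace ℝ Z] [CompleteSpace Z]
    (T : X →L[ℝ] Z) (hT : Function.Injective T) :
    (¬ SigmaPorous (Set.range fun z' : StrongDual ℝ Z => z'.comp T) ↔
        ∃ α : ℝ, 0 < α ∧ ∀ x, α * ‖x‖ ≤ ‖T x‖) ∧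
    (¬ SigmaPorous (Set.range fun z' : StrongDual ℝ Z => z'.comp T) ↔
        Function.Surjective fun z' : StrongDual ℝ Z => z'.comp T) :=
  stmt5_general T
end

section
/- Let X be a normed space and S ⊆ X* a separating subset (x*(x) = 0 for all x* ∈ S implies x = 0). If S is not contained in any σ-porous subset of X*, then S is norming: the functional N_S(x) = sup{ |x*(x)|/‖x*‖ : x* ∈ S, x* ≠ 0 } is an equivalent norm on X. -/
/-!
If `S` is not norming, then for every `n` there is a unit vector `vₙ` on which every `x' ∈ S`
is small: `|x' vₙ| ≤ ‖x'‖ / (n + 1)`. The set of all functionals with this property is porous: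
given `a` and `t > 0`, choose `m` so large that `‖z‖ / (m + 1) < 3t/4` for all `z` near `a`,
and move from `a` by `±t f`, where `f` is a norm-one functional with `f vₘ = 1` and the sign
makes `|(a ± t f) vₘ| ≥ t`. Every `z` within `t/4` of the new point has `|z vₘ| ≥ 3t/4`, so
misses the set. Hence `S` lies in a porous set.
-/

open Filter

open NormedSpace in
/-- The norming functional associated with a set `S` of functionals. -/
noncomputable def normingFun {X : Type*} [NormedAddCommGroup X] [NormedSpace ℝ X]
    (S : Set (StrongDual ℝ X)) (x : X) : ℝ :=
  sSup {r : ℝ | ∃ x' ∈ S, x' ≠ 0 ∧ r = |x' x| / ‖x'‖}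

open Topology

theorem Porous.sigmaPorous {α : Type*} [PseudoMetricSpace α] {A : Set α} {c : ℝ}
    (hA : Porous A c) (hc₀ : 0 < c) (hc₁ : c < 1) : SigmaPorous A :=
  ⟨fun _ => A, fun _ => ⟨c, hc₀, hc₁, hA⟩, (Set.iUnion_const A).symm⟩

theorem exists_abs_eq_le_abs_add (r : ℝ) {t : ℝ} (ht : 0 ≤ t) :
    ∃ s : ℝ, |s| = t ∧ t ≤ |r + s| := by
  rcases le_total 0 r with hr | hr
  · exact ⟨t, abs_of_nonneg ht, by rw [abs_of_nonneg (by linarith)]; linarith⟩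
  · exact ⟨-t, by rw [abs_neg, abs_of_nonneg ht], by rw [abs_of_nonpos (by linarith)]; linarith⟩

section NormingFun

variable {X : Type*} [NormedAddCommGroup X] [NormedSpace ℝ X] (S : Set (StrongDual ℝ X))

theorem norm_mem_upperBounds_normingFun (x : X) :
    ‖x‖ ∈ upperBounds {r : ℝ | ∃ x' ∈ S, x' ≠ 0 ∧ r = |x' x| / ‖x'‖} := by
  rintro r ⟨x', -, hx', rfl⟩
  rw [div_le_iff₀ (norm_pos_iff.mpr hx'), mul_comm, ← Real.norm_eq_abs]
  exact x'.le_opNorm x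

theorem normingFun_le_norm (x : X) : normingFun S x ≤ ‖x‖ :=
  Real.sSup_le (norm_mem_upperBounds_normingFun S x) (norm_nonneg x)

theorem normingFun_nonneg (x : X) : 0 ≤ normingFun S x := by
  apply Real.sSup_nonneg
  rintro r ⟨x', -, -, rfl⟩
  positivity

variable {S}

theorem abs_apply_le_normingFun_mul_norm {x' : StrongDual ℝ X} (hx' : x' ∈ S) (x : X) :
    |x' x| ≤ normingFun S x * ‖x'‖ := by
  rcases eq_or_ne x' 0 with rfl | hne
  · simp
  rw [← div_le_iff₀ (norm_pos_iff.mpr hne)]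
  exact le_csSup ⟨_, norm_mem_upperBounds_normingFun S x⟩ ⟨x', hx', hne, rfl⟩

theorem exists_norm_eq_one_abs_apply_le_of_normingFun_lt {x : X} {α : ℝ}
    (hx : normingFun S x < α * ‖x‖) :
    ∃ v : X, ‖v‖ = 1 ∧ ∀ x' ∈ S, |x' v| ≤ α * ‖x'‖ := by
  have hx₀ : 0 < ‖x‖ := by
    by_contra! h
    rw [le_antisymm h (norm_nonneg x), mul_zero] at hx
    exact (normingFun_nonneg S x).not_gt hx
  refine ⟨‖x‖⁻¹ • x, by rw [norm_smul, norm_inv, norm_norm, inv_mul_cancel₀ hx₀.ne'], ?_⟩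
  intro x' hx'
  rw [map_smul, smul_eq_mul, abs_mul, abs_inv, abs_norm, inv_mul_le_iff₀ hx₀]
  calc |x' x| ≤ normingFun S x * ‖x'‖ := abs_apply_le_normingFun_mul_norm hx' x
    _ ≤ ‖x‖ * (α * ‖x'‖) := by nlinarith [norm_nonneg x']

end NormingFun

section Porosity

variable {X : Type*} [NormedAddCommGroup X] [NormedSpace ℝ X] {v : ℕ → X} {ε : ℕ → ℝ}

theorem exists_dist_eq_closedBall_inter_setOf_forall_abs_apply_le_eq_empty
    (hv : ∀ n, ‖v n‖ = 1) (hε : Tendsto ε atTop (𝓝 0)) (a : StrongDual ℝ X) {t : ℝ}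
    (ht : 0 < t) :
    ∃ y : StrongDual ℝ X, dist y a = t ∧
      Metric.closedBall y (t / 4) ∩ {g | ∀ n, |g (v n)| ≤ ε n * ‖g‖} = ∅ := by
  obtain ⟨m, hm⟩ : ∃ m, |ε m| * (‖a‖ + 2 * t) < 3 * t / 4 := by
    have h : Tendsto (fun m => |ε m| * (‖a‖ + 2 * t)) atTop (𝓝 0) := by
      simpa using hε.abs.mul_const (‖a‖ + 2 * t)
    exact (h.eventually (gt_mem_nhds (by positivity))).exists
  obtain ⟨f, hf, hfv⟩ := exists_dual_vector ℝ (v m) (by simp [hv m])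
  rw [hv m, RCLike.ofReal_one] at hfv
  obtain ⟨s, hs, hsv⟩ := exists_abs_eq_le_abs_add (a (v m)) ht.le
  have hdist : dist (a + s • f) a = t := by
    rw [dist_eq_norm, add_sub_cancel_left, norm_smul, hf, mul_one, Real.norm_eq_abs, hs]
  refine ⟨a + s • f, hdist, Set.eq_empty_of_forall_notMem fun z ⟨hz, hzB⟩ => ?_⟩
  rw [Metric.mem_closedBall, dist_eq_norm] at hz
  have hzv : |z (v m) - (a (v m) + s)| ≤ t / 4 := by
    have h := (z - (a + s • f)).le_opNorm (v m)
    rw [hv m, mul_one, Real.norm_eq_abs] at h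
    simpa [hfv] using h.trans hz
  have hlower : 3 * t / 4 ≤ |z (v m)| := by
    linarith [abs_sub_abs_le_abs_sub (a (v m) + s) (z (v m)),
      abs_sub_comm (a (v m) + s) (z (v m))]
  have hnorm : ‖z‖ ≤ ‖a‖ + 2 * t := by
    calc ‖z‖ ≤ ‖a + s • f‖ + ‖z - (a + s • f)‖ := norm_le_insert' z (a + s • f)
      _ ≤ ‖a‖ + ‖s • f‖ + t / 4 := by gcongr; exact norm_add_le a _
      _ ≤ ‖a‖ + 2 * t := by rw [norm_smul, hf, mul_one, Real.norm_eq_abs, hs]; linarith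
  have hupper : |z (v m)| ≤ |ε m| * (‖a‖ + 2 * t) :=
    calc |z (v m)| ≤ ε m * ‖z‖ := hzB m
      _ ≤ |ε m| * ‖z‖ := by gcongr; exact le_abs_self _
      _ ≤ |ε m| * (‖a‖ + 2 * t) := by gcongr
  linarith

theorem porous_setOf_forall_abs_apply_le (hv : ∀ n, ‖v n‖ = 1)
    (hε : Tendsto ε atTop (𝓝 0)) :
    Porous {g : StrongDual ℝ X | ∀ n, |g (v n)| ≤ ε n * ‖g‖} (1 / 4) := by
  intro a _
  choose y hya hy using fun k : ℕ =>
    exists_dist_eq_closedBall_inter_setOf_forall_abs_apply_le_eq_empty hv hε a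
      (Nat.one_div_pos_of_nat (n := k))
  refine ⟨y, ?_, fun k => ?_⟩
  · rw [tendsto_iff_dist_tendsto_zero]
    simpa only [hya] using tendsto_one_div_add_atTop_nhds_zero_nat
  · rw [hya, one_div_mul_eq_div]
    exact hy k

end Porosity

open NormedSpace in
theorem stmt7_general {X : Type*} [NormedAddCommGroup X] [NormedSpace ℝ X]
    (S : Set (StrongDual ℝ X))
    (hnp : ¬ ∃ A : Set (StrongDual ℝ X), SigmaPorous A ∧ S ⊆ A) :
    ∃ α : ℝ, 0 < α ∧ ∀ x : X, α * ‖x‖ ≤ normingFun S x ∧ normingFun S x ≤ ‖x‖ := by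
  by_contra! hnorming
  have hbad : ∀ n : ℕ, ∃ v : X, ‖v‖ = 1 ∧ ∀ x' ∈ S, |x' v| ≤ 1 / ((n : ℝ) + 1) * ‖x'‖ := by
    intro n
    obtain ⟨x, hx⟩ := hnorming _ Nat.one_div_pos_of_nat
    exact exists_norm_eq_one_abs_apply_le_of_normingFun_lt
      (not_le.mp fun h => (hx h).not_ge (normingFun_le_norm S x))
  choose v hv hvS using hbad
  exact hnp ⟨_, (porous_setOf_forall_abs_apply_le hv tendsto_one_div_add_atTop_nhds_zero_nat
    |>.sigmaPorous (by norm_num) (by norm_num)), fun x' hx' n => hvS n x' hx'⟩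

open NormedSpace in
theorem stmt7 {X : Type*} [NormedAddCommGroup X] [NormedSpace ℝ X]
    (S : Set (StrongDual ℝ X))
    (hsep : ∀ x : X, (∀ x' ∈ S, x' x = 0) → x = 0)
    (hnp : ¬ ∃ A : Set (StrongDual ℝ X), SigmaPorous A ∧ S ⊆ A) :
    ∃ α : ℝ, 0 < α ∧ ∀ x : X, α * ‖x‖ ≤ normingFun S x ∧ normingFun S x ≤ ‖x‖ :=
  stmt7_general S hnp
end

section
/- Let X be a normed space and φ : X → [0,∞) with φ(λx) = |λ|φ(x) and φ(x) = 0 iff x = 0. If the set C_φ = { x : φ(x) ≤ 1 } is unbounded, then the polar set C_φ° = { x* ∈ X* : sup_{x ∈ C_φ} x*(x) ≤ 1 } is contained in a porous subset of X*. -/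
open Filter

/-!
Take `a` in the polar of an unbounded set `s` and points `x ∈ s` of large norm. Moving `a` by a
small multiple `r • g` of a norming functional `g` of `x` raises the value at `x` by `r ‖x‖`,
while every functional within `c r` of `a + r • g` still raises it by at least `(1 - c) r ‖x‖`.
Once `(1 - c) r ‖x‖ > 2` this leaves the polar, and since `‖x‖` can be taken arbitrarily large,
`r` can be taken arbitrarily small. Since `{φ ≤ 1}` is symmetric, its one-sided polar is the
absolute polar `polar ℝ {φ ≤ 1}`.
-/

open Bornology StrongDual

theorem setOf_forall_apply_le_one_eq_polar {F : Type*} [SeminormedAddCommGroup F]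
    [NormedSpace ℝ F] {s : Set F} (hs : ∀ x ∈ s, -x ∈ s) :
    {x' : StrongDual ℝ F | ∀ x ∈ s, x' x ≤ 1} = polar ℝ s := by
  ext x'
  refine ⟨fun h x hx => abs_le.mpr ⟨?_, h x hx⟩, fun h x hx => (le_abs_self _).trans (h x hx)⟩
  simpa [neg_le] using h (-x) (hs x hx)

section Polar

variable {𝕜 E : Type*} [RCLike 𝕜] [SeminormedAddCommGroup E] [NormedSpace 𝕜 E]

theorem exists_mem_lt_norm_of_not_isBounded {s : Set E} (hs : ¬ IsBounded s) (R : ℝ) :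
    ∃ x ∈ s, R < ‖x‖ := by
  by_contra! h
  exact hs (isBounded_iff_forall_norm_le.mpr ⟨R, h⟩)

theorem sub_le_norm_apply_of_mem_closedBall {a g z : StrongDual 𝕜 E} {x : E} {r c : ℝ}
    (hr : 0 ≤ r) (hgx : g x = ‖x‖) (hz : z ∈ Metric.closedBall (a + (r : 𝕜) • g) (c * r)) :
    r * (1 - c) * ‖x‖ - ‖a x‖ ≤ ‖z x‖ := by
  set y := a + (r : 𝕜) • g
  have hzy : ‖(z - y) x‖ ≤ c * r * ‖x‖ :=
    (z - y).le_opNorm x |>.trans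
      (mul_le_mul_of_nonneg_right (mem_closedBall_iff_norm.mp hz) (norm_nonneg x))
  have hyx : y x = a x + ((r * ‖x‖ : ℝ) : 𝕜) := by simp [y, hgx]
  have hrx : ‖((r * ‖x‖ : ℝ) : 𝕜)‖ = r * ‖x‖ := by
    rw [RCLike.norm_ofReal, abs_of_nonneg (by positivity)]
  have hzx : z x = ((r * ‖x‖ : ℝ) : 𝕜) + a x + (z - y) x := by
    rw [sub_apply, hyx]; ring
  calc r * (1 - c) * ‖x‖ - ‖a x‖ ≤ r * ‖x‖ - ‖a x‖ - ‖(z - y) x‖ := by nlinarith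
    _ = ‖((r * ‖x‖ : ℝ) : 𝕜)‖ - ‖a x‖ - ‖(z - y) x‖ := by rw [hrx]
    _ ≤ ‖z x‖ := by
      have hsplit : ((r * ‖x‖ : ℝ) : 𝕜) = z x - a x - (z - y) x := by rw [hzx]; ring
      linarith [norm_sub_le (z x - a x) ((z - y) x), norm_sub_le (z x) (a x),
        congrArg norm hsplit]

theorem porous_polar_of_not_isBounded {s : Set E} (hs : ¬ IsBounded s) {c : ℝ} (hc : c < 1) :
    Porous (polar 𝕜 s) c := by
  intro a ha
  set r : ℕ → ℝ := fun n => 1 / ((n : ℝ) + 1)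
  choose x hxs hx using fun n : ℕ =>
    exists_mem_lt_norm_of_not_isBounded hs (3 * ((n : ℝ) + 1) / (1 - c))
  have hc' : 0 < 1 - c := sub_pos.mpr hc
  have hr : ∀ n, 0 ≤ r n := fun n => by positivity
  have hfar : ∀ n, 3 < r n * (1 - c) * ‖x n‖ := fun n => by
    have := (div_lt_iff₀' hc').mp (hx n)
    rw [show r n * (1 - c) * ‖x n‖ = (1 - c) * ‖x n‖ / ((n : ℝ) + 1) by ring,
      lt_div_iff₀ (by positivity)]
    exact this
  have hx0 : ∀ n, ‖x n‖ ≠ 0 := fun n => (lt_trans (by positivity) (hx n)).ne'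
  choose g hg hgx using fun n => exists_dual_vector 𝕜 (x n) (hx0 n)
  have hdist : ∀ n, dist (a + (r n : 𝕜) • g n) a = r n := fun n => by
    rw [dist_eq_norm, add_sub_cancel_left, norm_smul, hg, RCLike.norm_ofReal, mul_one,
      abs_of_nonneg (hr n)]
  refine ⟨fun n => a + (r n : 𝕜) • g n, ?_, fun n => ?_⟩
  · rw [tendsto_iff_dist_tendsto_zero]
    simpa only [hdist] using tendsto_one_div_add_atTop_nhds_zero_nat
  · rw [hdist, Set.eq_empty_iff_forall_notMem]
    rintro z ⟨hz, hzs⟩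
    have hlow := sub_le_norm_apply_of_mem_closedBall (hr n) (hgx n) hz
    have hzx := (mem_polar_iff 𝕜 s).mp hzs (x n) (hxs n)
    have hax := (mem_polar_iff 𝕜 s).mp ha (x n) (hxs n)
    linarith [hfar n]

end Polar

open NormedSpace in
theorem stmt9_general {X : Type*} [NormedAddCommGroup X] [NormedSpace ℝ X]
    (φ : X → ℝ)
    (hhom : ∀ (a : ℝ) (x : X), φ (a • x) = |a| * φ x)
    (hunb : ¬ ∃ M : ℝ, ∀ x, φ x ≤ 1 → ‖x‖ ≤ M) :
    ∃ (A : Set (StrongDual ℝ X)) (c : ℝ), 0 < c ∧ c < 1 ∧ Porous A c ∧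
      {x' : StrongDual ℝ X | ∀ x, φ x ≤ 1 → x' x ≤ 1} ⊆ A := by
  set C := {x : X | φ x ≤ 1}
  have hsymm : ∀ x ∈ C, -x ∈ C := fun x hx => by
    simpa [C, neg_one_smul] using (hhom (-1) x).trans_le (by simpa [C] using hx)
  have hC : ¬ IsBounded C := by simpa [C, isBounded_iff_forall_norm_le] using hunb
  exact ⟨polar ℝ C, 1 / 2, by norm_num, by norm_num,
    porous_polar_of_not_isBounded hC (by norm_num), (setOf_forall_apply_le_one_eq_polar hsymm).le⟩

open NormedSpace in
theorem stmt9 {X : Type*} [NormedAddCommGroup X] [NormedSpace ℝ X]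
    (φ : X → ℝ) (hnn : ∀ x, 0 ≤ φ x)
    (hhom : ∀ (a : ℝ) (x : X), φ (a • x) = |a| * φ x)
    (hzero : ∀ x, φ x = 0 ↔ x = 0)
    (hunb : ¬ ∃ M : ℝ, ∀ x, φ x ≤ 1 → ‖x‖ ≤ M) :
    ∃ (A : Set (StrongDual ℝ X)) (c : ℝ), 0 < c ∧ c < 1 ∧ Porous A c ∧
      {x' : StrongDual ℝ X | ∀ x, φ x ≤ 1 → x' x ≤ 1} ⊆ A :=
  stmt9_general φ hhom hunb
end

section
/- Let (X,d) and (Y,d') be metric spaces with base points, and let F : X → Y be an injective Lipschitz map with F(0_X) = 0_Y. If F is not coarse Lipschitz (i.e., there is no α > 0 with α d(x,x') ≤ d'(F(x),F(x')) for all x,x'), then the set { f ∘ F : f ∈ Lip_0(Y) } is a σ-porous subset of (Lip_0(X), ‖·‖_L). -/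
open Filter

/-- `d` is a metric on `X`. -/
structure IsMetric {X : Type*} (d : X → X → ℝ) : Prop where
  refl : ∀ x, d x x = 0
  eq_of : ∀ {x y}, d x y = 0 → x = y
  symm : ∀ x y, d x y = d y x
  triangle : ∀ x y z, d x z ≤ d x y + d y z

/-- The Lipschitz constant (norm) of `f` with respect to the distance `d`. -/
noncomputable def lipNorm {X Y : Type*} [SeminormedAddCommGroup Y]
    (d : X → X → ℝ) (f : X → Y) : ℝ :=
  sSup {r : ℝ | ∃ x x' : X, x ≠ x' ∧ r = ‖f x - f x'‖ / d x x'}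

/-- `A` is a porous subset of the metric space `(F, ρ)` with porosity constant `c`:
for every `a ∈ A` there is a sequence `(yₙ) ⊆ F` with `ρ (yₙ) a → 0` such that the
closed ball `B(yₙ, c · ρ (yₙ, a))` (taken in `F`) does not meet `A`. -/
def PorousIn {α : Type*} (ρ : α → α → ℝ) (F : Set α) (A : Set α) (c : ℝ) : Prop :=
  ∀ a ∈ A, ∃ y : ℕ → α, (∀ n, y n ∈ F) ∧
    Tendsto (fun n => ρ (y n) a) atTop (nhds 0) ∧
    ∀ n, ∀ g ∈ F, ρ (y n) g ≤ c * ρ (y n) a → g ∉ A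

/-- `A` is a σ-porous subset of `(F, ρ)`: a countable union of porous subsets. -/
def SigmaPorousIn {α : Type*} (ρ : α → α → ℝ) (F : Set α) (A : Set α) : Prop :=
  ∃ P : ℕ → Set α, (∀ n, ∃ c : ℝ, 0 < c ∧ c < 1 ∧ PorousIn ρ F (P n) c) ∧ A = ⋃ n, P n

/-- `Lip₀(X)`: real-valued Lipschitz functions vanishing at the base point `x₀`. -/
def Lip0R {X : Type*} [MetricSpace X] (x₀ : X) : Set (X → ℝ) :=
  {g : X → ℝ | g x₀ = 0 ∧ ∃ L : ℝ, ∀ x x', |g x - g x'| ≤ L * dist x x'}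

section Aux
variable {X : Type*} [MetricSpace X]

lemma bddAbove_ratio {f : X → ℝ} {L : ℝ}
    (hL : ∀ x x', |f x - f x'| ≤ L * dist x x') :
    BddAbove {r : ℝ | ∃ x x' : X, x ≠ x' ∧ r = ‖f x - f x'‖ / dist x x'} := by
  refine ⟨L, ?_⟩
  rintro r ⟨a, b, hab, rfl⟩
  have hd : 0 < dist a b := dist_pos.2 hab
  rw [Real.norm_eq_abs, div_le_iff₀ hd]
  exact hL a b

lemma lipNorm_le {f : X → ℝ} {L : ℝ} (hL0 : 0 ≤ L)
    (hL : ∀ x x', |f x - f x'| ≤ L * dist x x') :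
    lipNorm (fun x x' : X => dist x x') f ≤ L := by
  apply Real.sSup_le _ hL0
  rintro r ⟨a, b, hab, rfl⟩
  have hd : 0 < dist a b := dist_pos.2 hab
  rw [Real.norm_eq_abs, div_le_iff₀ hd]
  exact hL a b

lemma ratio_le_lipNorm {f : X → ℝ} {L : ℝ}
    (hL : ∀ x x', |f x - f x'| ≤ L * dist x x') {x x' : X} (h : x ≠ x') :
    |f x - f x'| / dist x x' ≤ lipNorm (fun a b : X => dist a b) f :=
  le_csSup (bddAbove_ratio hL) ⟨x, x', h, by rw [Real.norm_eq_abs]⟩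

lemma bump_lip {t δ : ℝ} (ht : 0 ≤ t) (w : X) (x x' : X) :
    |t * max (δ - dist x w) 0 - t * max (δ - dist x' w) 0| ≤ t * dist x x' := by
  rw [← mul_sub, abs_mul, abs_of_nonneg ht]
  refine mul_le_mul_of_nonneg_left ?_ ht
  calc |max (δ - dist x w) 0 - max (δ - dist x' w) 0|
      ≤ |(δ - dist x w) - (δ - dist x' w)| := abs_max_sub_max_le_abs _ _ _
    _ = |dist x' w - dist x w| := by congr 1; ring
    _ ≤ dist x' x := abs_dist_sub_le _ _ _
    _ = dist x x' := dist_comm _ _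

end Aux

theorem stmt11 {X Y : Type*} [MetricSpace X] [MetricSpace Y] (x₀ : X) (y₀ : Y)
    (F : X → Y) (hinj : Function.Injective F)
    (hlip : ∃ L : ℝ, ∀ x x', dist (F x) (F x') ≤ L * dist x x') (hF0 : F x₀ = y₀)
    (hnc : ¬ ∃ α : ℝ, 0 < α ∧ ∀ x x', α * dist x x' ≤ dist (F x) (F x')) :
    SigmaPorousIn (fun f g => lipNorm (fun x x' : X => dist x x') (f - g)) (Lip0R x₀)
      {g : X → ℝ | ∃ f ∈ Lip0R y₀, g = f ∘ F} := by
  obtain ⟨LF, hLF⟩ := hlip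
  have hnc' : ∀ α : ℝ, 0 < α → ∃ x x', dist (F x) (F x') < α * dist x x' := by
    intro α hα
    by_contra h
    push_neg at h
    exact hnc ⟨α, hα, fun x x' => (h x x')⟩
  refine ⟨fun n => {g | ∃ f : Y → ℝ, f y₀ = 0 ∧
      (∀ y y', |f y - f y'| ≤ (n : ℝ) * dist y y') ∧ g = f ∘ F}, ?_, ?_⟩
  · intro n
    refine ⟨1/4, by norm_num, by norm_num, ?_⟩
    rintro a ⟨f, hf0, hfl, rfl⟩
    -- choose compressed pairs
    choose u v huv using fun k : ℕ => hnc' (1/((k : ℝ)+1)) (by positivity)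
    have hune : ∀ k, u k ≠ v k := by
      intro k h
      have := huv k
      rw [h] at this
      simp at this
    have hdpos : ∀ k, 0 < dist (u k) (v k) := fun k => dist_pos.2 (hune k)
    have hLF0 : 0 ≤ LF := by
      nlinarith [hLF (u 0) (v 0), dist_nonneg (x := F (u 0)) (y := F (v 0)), hdpos 0]
    -- choose center far from x₀
    have hwoex : ∀ k : ℕ, ∃ w o : X, dist w o = dist (u k) (v k) ∧
        dist (F w) (F o) = dist (F (u k)) (F (v k)) ∧
        dist (u k) (v k) / 2 ≤ dist x₀ w := by
      intro k
      by_cases h : dist (u k) (v k) / 2 ≤ dist x₀ (u k)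
      · exact ⟨u k, v k, rfl, rfl, h⟩
      · refine ⟨v k, u k, dist_comm _ _, dist_comm _ _, ?_⟩
        push_neg at h
        have h1 := dist_triangle (u k) x₀ (v k)
        have h2 : dist (u k) x₀ = dist x₀ (u k) := dist_comm _ _
        linarith
    choose w o hwod hwoF hwx using hwoex
    set t : ℕ → ℝ := fun k => 16 * ((n : ℝ) + 1) / ((k : ℝ) + 1) with ht
    have htpos : ∀ k, 0 < t k := fun k => by positivity
    set δ : ℕ → ℝ := fun k => dist (u k) (v k) / 2 with hδ
    set b : ℕ → X → ℝ := fun k x => t k * max (δ k - dist x (w k)) 0 with hb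
    have hblip : ∀ k x x', |b k x - b k x'| ≤ t k * dist x x' :=
      fun k => bump_lip (htpos k).le (w k)
    have hbw : ∀ k, b k (w k) = t k * δ k := by
      intro k
      simp only [hb, dist_self, sub_zero]
      rw [max_eq_left (by have := (hdpos k); simp only [hδ]; linarith)]
    have hbo : ∀ k, b k (o k) = 0 := by
      intro k
      have hd : dist (o k) (w k) = dist (u k) (v k) := by rw [dist_comm]; exact hwod k
      simp only [hb, hd]
      rw [max_eq_right (by have := (hdpos k); simp only [hδ]; linarith), mul_zero]
    have hbx0 : ∀ k, b k x₀ = 0 := by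
      intro k
      simp only [hb]
      rw [max_eq_right (by have := hwx k; simp only [hδ]; linarith), mul_zero]
    have hwone : ∀ k, w k ≠ o k := by
      intro k
      have : 0 < dist (w k) (o k) := by rw [hwod k]; exact hdpos k
      exact dist_pos.1 this
    -- flip bound
    have hflip : ∀ (h : Y → ℝ), (∀ y y', |h y - h y'| ≤ (n : ℝ) * dist y y') →
        ∀ x x', |h (F x) - h (F x')| ≤ ((n : ℝ) * LF) * dist x x' := by
      intro h hh x x'
      calc |h (F x) - h (F x')| ≤ (n : ℝ) * dist (F x) (F x') := hh _ _
        _ ≤ (n : ℝ) * (LF * dist x x') :=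
            mul_le_mul_of_nonneg_left (hLF x x') (Nat.cast_nonneg n)
        _ = ((n : ℝ) * LF) * dist x x' := by ring
    refine ⟨fun k x => f (F x) + b k x, ?_, ?_, ?_⟩
    · -- membership in Lip0R x₀
      intro k
      constructor
      · show f (F x₀) + b k x₀ = 0
        rw [hF0, hf0, hbx0 k, add_zero]
      · refine ⟨(n : ℝ) * LF + t k, fun x x' => ?_⟩
        calc |f (F x) + b k x - (f (F x') + b k x')|
            = |(f (F x) - f (F x')) + (b k x - b k x')| := by ring_nf
          _ ≤ |f (F x) - f (F x')| + |b k x - b k x'| := abs_add_le _ _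
          _ ≤ ((n : ℝ) * LF) * dist x x' + t k * dist x x' :=
              add_le_add (hflip f hfl x x') (hblip k x x')
          _ = ((n : ℝ) * LF + t k) * dist x x' := by ring
    · -- tendsto
      have hsub : ∀ k, ((fun x => f (F x) + b k x) - f ∘ F) = b k := by
        intro k; funext x; simp [Function.comp]
      have hle : ∀ k, lipNorm (fun x x' : X => dist x x') (b k) ≤ t k :=
        fun k => lipNorm_le (htpos k).le (hblip k)
      have hge : ∀ k, 0 ≤ lipNorm (fun x x' : X => dist x x') (b k) := by
        intro k
        refine le_trans ?_ (ratio_le_lipNorm (hblip k) (hwone k))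
        positivity
      have htt : Tendsto t atTop (nhds 0) := by
        have : t = fun k : ℕ => (16 * ((n : ℝ) + 1)) * (1 / ((k : ℝ) + 1)) := by
          funext k; simp only [ht]; ring
        rw [this]
        simpa using tendsto_one_div_add_atTop_nhds_zero_nat.const_mul (16 * ((n : ℝ) + 1))
      apply squeeze_zero (fun k => by simpa [hsub k] using hge k)
        (fun k => by simpa [hsub k] using hle k) htt
    · -- porosity exclusion
      rintro k g hg hρ ⟨f', hf'0, hf'l, rfl⟩
      have hsub : ∀ k, ((fun x => f (F x) + b k x) - f ∘ F) = b k := by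
        intro k; funext x; simp [Function.comp]
      have hρa : lipNorm (fun x x' : X => dist x x')
          ((fun x => f (F x) + b k x) - f ∘ F) ≤ t k := by
        rw [hsub k]; exact lipNorm_le (htpos k).le (hblip k)
      set ψ : X → ℝ := (fun x => f (F x) + b k x) - f' ∘ F with hψ
      have hψx : ∀ x, ψ x = f (F x) + b k x - f' (F x) := fun x => rfl
      have hψlip : ∀ x x', |ψ x - ψ x'| ≤ (t k + 2 * ((n : ℝ) * LF)) * dist x x' := by
        intro x x'
        calc |ψ x - ψ x'|
            = |(b k x - b k x') + ((f (F x) - f (F x')) - (f' (F x) - f' (F x')))| := by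
              rw [hψx, hψx]; ring_nf
          _ ≤ |b k x - b k x'| + |(f (F x) - f (F x')) - (f' (F x) - f' (F x'))| :=
              abs_add_le _ _
          _ ≤ |b k x - b k x'| + (|f (F x) - f (F x')| + |f' (F x) - f' (F x')|) := by
              have := abs_sub (f (F x) - f (F x')) (f' (F x) - f' (F x'))
              linarith
          _ ≤ t k * dist x x' + (((n : ℝ) * LF) * dist x x' + ((n : ℝ) * LF) * dist x x') := by
              have h1 := hblip k x x'
              have h2 := hflip f hfl x x'
              have h3 := hflip f' hf'l x x'
              linarith
          _ = (t k + 2 * ((n : ℝ) * LF)) * dist x x' := by ring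
      have hratio : |ψ (w k) - ψ (o k)| / dist (w k) (o k) ≤
          lipNorm (fun x x' : X => dist x x') ψ :=
        ratio_le_lipNorm hψlip (hwone k)
      have hchain : lipNorm (fun x x' : X => dist x x') ψ ≤ (1/4) * t k := by
        refine le_trans hρ ?_
        have := hρa
        nlinarith
      set d := dist (u k) (v k) with hd
      have hdw : dist (w k) (o k) = d := hwod k
      have hkey : |ψ (w k) - ψ (o k)| ≤ (1/4) * t k * d := by
        have := le_trans hratio hchain
        rw [div_le_iff₀ (by rw [hdw]; exact hdpos k)] at this
        rw [hdw] at this; linarith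
      -- lower bound on |ψ w - ψ o|
      have hDbound : |(f (F (w k)) - f' (F (w k))) - (f (F (o k)) - f' (F (o k)))| ≤
          2 * (n : ℝ) * dist (F (u k)) (F (v k)) := by
        rw [← hwoF k]
        have h1 := hfl (F (w k)) (F (o k))
        have h2 := hf'l (F (w k)) (F (o k))
        have := abs_sub (f (F (w k)) - f (F (o k))) (f' (F (w k)) - f' (F (o k)))
        have heq : (f (F (w k)) - f' (F (w k))) - (f (F (o k)) - f' (F (o k))) =
            (f (F (w k)) - f (F (o k))) - (f' (F (w k)) - f' (F (o k))) := by ring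
        rw [heq]
        linarith
      have hψwo : ψ (w k) - ψ (o k) = t k * δ k +
          ((f (F (w k)) - f' (F (w k))) - (f (F (o k)) - f' (F (o k)))) := by
        rw [hψx, hψx, hbw k, hbo k]; ring
      have hlow : t k * δ k - 2 * (n : ℝ) * dist (F (u k)) (F (v k)) ≤
          |ψ (w k) - ψ (o k)| := by
        rw [hψwo]
        have := abs_le.1 (abs_abs_sub_abs_le_abs_sub (t k * δ k +
          ((f (F (w k)) - f' (F (w k))) - (f (F (o k)) - f' (F (o k))))) (t k * δ k))
        have h0 := neg_abs_le (t k * δ k +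
          ((f (F (w k)) - f' (F (w k))) - (f (F (o k)) - f' (F (o k)))))
        have h1 := le_abs_self (t k * δ k +
          ((f (F (w k)) - f' (F (w k))) - (f (F (o k)) - f' (F (o k)))))
        have h2 := neg_abs_le ((f (F (w k)) - f' (F (w k))) - (f (F (o k)) - f' (F (o k))))
        linarith [hDbound]
      -- final numeric contradiction
      have hFd : dist (F (u k)) (F (v k)) < (1/((k : ℝ)+1)) * d := huv k
      have hdp : 0 < d := hdpos k
      have hK : (0:ℝ) < (k : ℝ) + 1 := by positivity
      have hδk : δ k = d / 2 := rfl
      have htk : t k = 16 * ((n : ℝ) + 1) / ((k : ℝ) + 1) := rfl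
      have hn0 : (0:ℝ) ≤ (n : ℝ) := Nat.cast_nonneg n
      have hFd' : 2 * (n : ℝ) * dist (F (u k)) (F (v k)) ≤
          2 * (n : ℝ) * ((1/((k : ℝ)+1)) * d) := by
        apply mul_le_mul_of_nonneg_left hFd.le (by positivity)
      have hmain : t k * (d / 2) - 2 * (n : ℝ) * ((1/((k : ℝ)+1)) * d) ≤ (1/4) * t k * d := by
        rw [← hδk]
        linarith [hlow, hkey, hFd']
      rw [htk] at hmain
      have hm2 := mul_le_mul_of_nonneg_right hmain hK.le
      have he1 : (16 * ((n : ℝ) + 1) / ((k : ℝ) + 1) * (d / 2) -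
          2 * (n : ℝ) * (1 / ((k : ℝ) + 1) * d)) * ((k : ℝ) + 1) =
          (6 * (n : ℝ) + 8) * d := by field_simp; ring
      have he2 : (1 / 4 * (16 * ((n : ℝ) + 1) / ((k : ℝ) + 1)) * d) * ((k : ℝ) + 1) =
          (4 * (n : ℝ) + 4) * d := by field_simp; ring
      rw [he1, he2] at hm2
      nlinarith [hm2, hdp, hn0]
  · -- union equality
    ext g
    simp only [Set.mem_setOf_eq, Set.mem_iUnion]
    constructor
    · rintro ⟨f, ⟨hf0, L, hfL⟩, rfl⟩
      refine ⟨⌈L⌉₊, f, hf0, fun y y' => ?_, rfl⟩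
      calc |f y - f y'| ≤ L * dist y y' := hfL y y'
        _ ≤ (⌈L⌉₊ : ℝ) * dist y y' :=
            mul_le_mul_of_nonneg_right (Nat.le_ceil L) dist_nonneg
    · rintro ⟨n, f, hf0, hfl, rfl⟩
      exact ⟨f, ⟨hf0, (n : ℝ), hfl⟩, rfl⟩
end
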